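/- Suppose the reverse transition p(x_{n−1}|x_n) = N(μ_n(x_n), diag(σ_n(x_n)²)) has mean parameterized by μ_n(x_n) = μ̃_n(x_n, (1/√(ᾱ_n))(x_n − √(β̄_n) ε̂_n(x_n))) for an arbitrary function ε̂_n. Then for each x_n, the minimizer over σ_n(x_n)² of E_{q(x₀,x_n)} D_KL(q(x_{n−1}|x_n) ‖ p(x_{n−1}|x_n)) is σ̃*_n(x_n)² = λ_n² 1 + γ_n² (β̄_n/ᾱ_n) E_{q(x₀|x_n)}[(ε_n − ε̂_n(x_n))²], where the square is componentwise. -/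

import Mathlib

open MeasureTheory

/-- Mean `μ̃_n(x_n, x₀)` of the DDIM-family transition `q(x_{n−1} | x_n, x₀)`. -/
noncomputable def ddimMuTilde {d : ℕ} (abarp abarn bbarp bbarn lsq : ℝ)
    (xn x0 : Fin d → ℝ) : Fin d → ℝ :=
  Real.sqrt abarp • x0 +
    Real.sqrt (bbarp - lsq) • ((Real.sqrt bbarn)⁻¹ • (xn - Real.sqrt abarn • x0))

/-- The noise `ε_n(x₀) = (x_n − √ᾱ_n x₀)/√β̄_n`. -/
noncomputable def ddimNoise {d : ℕ} (abarn bbarn : ℝ) (xn x0 : Fin d → ℝ) : Fin d → ℝ :=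
  (Real.sqrt bbarn)⁻¹ • (xn - Real.sqrt abarn • x0)

/-- Density of the isotropic Gaussian `N(m, v I)` on `ℝ^d`. -/
noncomputable def gaussPdfIsoP {d : ℕ} (m : Fin d → ℝ) (v : ℝ) (z : Fin d → ℝ) : ℝ :=
  ((2 * Real.pi * v) ^ ((d : ℝ) / 2))⁻¹ * Real.exp (-(∑ i, (z i - m i) ^ 2) / (2 * v))

/-- Density of the Gaussian `N(m, diag v)` on `ℝ^d` (v = vector of variances). -/
noncomputable def gaussPdfDiag {d : ℕ} (m v : Fin d → ℝ) (z : Fin d → ℝ) : ℝ :=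
  ∏ i, (Real.sqrt (2 * Real.pi * v i))⁻¹ * Real.exp (-(z i - m i) ^ 2 / (2 * v i))

/-- KL divergence between two densities on `ℝ^d` (w.r.t. Lebesgue measure). -/
noncomputable def klDivFn {d : ℕ} (q p : (Fin d → ℝ) → ℝ) : ℝ :=
  ∫ x, q x * Real.log (q x / p x)

open Real

lemma int_sq_exp {b : ℝ} (hb : 0 < b) :
    ∫ x : ℝ, x ^ 2 * Real.exp (-b * x ^ 2) = Real.sqrt π / 2 * b ^ (-(3:ℝ)/2) := by
  have h1 : (∫ x : ℝ, x ^ 2 * Real.exp (-b * x ^ 2))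
      = 2 * ∫ x in Set.Ioi (0:ℝ), x ^ 2 * Real.exp (-b * x ^ 2) := by
    rw [← integral_comp_abs (f := fun t => t ^ 2 * Real.exp (-b * t ^ 2))]
    congr 1; funext x; simp [sq_abs]
  rw [h1]
  have h2 : ∀ x ∈ Set.Ioi (0:ℝ), x ^ 2 * Real.exp (-b * x ^ 2)
      = x ^ (2:ℝ) * Real.exp (-b * x ^ (2:ℝ)) := by
    intro x _; norm_cast
  rw [setIntegral_congr_fun measurableSet_Ioi h2,
    integral_rpow_mul_exp_neg_mul_rpow (by norm_num) (by norm_num) hb]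
  have : ((2:ℝ) + 1) / 2 = 1/2 + 1 := by norm_num
  rw [this, Real.Gamma_add_one (by norm_num), Real.Gamma_one_half_eq]
  have : (-((2:ℝ)+1)/2) = (-(3:ℝ)/2) := by norm_num
  rw [this]; ring

lemma int_odd_exp {b : ℝ} : ∫ x : ℝ, x * Real.exp (-b * x ^ 2) = 0 := by
  have h := integral_neg_eq_self (fun x : ℝ => x * Real.exp (-b * x ^ 2)) volume
  simp only [neg_sq, neg_mul] at h
  rw [integral_neg] at h
  simp only [neg_mul] at *
  linarith

lemma integrable_sq_exp {b : ℝ} (hb : 0 < b) :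
    Integrable (fun x : ℝ => x ^ 2 * Real.exp (-b * x ^ 2)) := by
  have h := integrable_rpow_mul_exp_neg_mul_sq hb (s := 2) (by norm_num)
  convert h using 2 with x
  norm_cast

lemma pdf1_shape (m c v : ℝ) (hv : 0 < v) (x : ℝ) :
    (Real.sqrt (2*Real.pi*v))⁻¹ * Real.exp (-(x-m)^2/(2*v)) * (x-c)^2
    = (Real.sqrt (2*Real.pi*v))⁻¹ *
      ((x-m) ^ 2 * Real.exp (-(1/(2*v)) * (x-m) ^ 2)
        + (2*(m-c)) * ((x-m) * Real.exp (-(1/(2*v)) * (x-m) ^ 2))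
        + (m-c)^2 * Real.exp (-(1/(2*v)) * (x-m) ^ 2)) := by
  have : -(x-m)^2/(2*v) = -(1/(2*v)) * (x-m)^2 := by field_simp
  rw [this]; ring

lemma pdf1_eq (m v : ℝ) (hv : 0 < v) : (fun x : ℝ => (Real.sqrt (2*Real.pi*v))⁻¹ * Real.exp (-(x-m)^2/(2*v)))
    = fun x => (Real.sqrt (2*Real.pi*v))⁻¹ * Real.exp (-(1/(2*v)) * (x-m)^2) := by
  funext x
  congr 1
  congr 1
  field_simp

lemma pdf1_integrable (m v : ℝ) (hv : 0 < v) :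
    Integrable (fun x : ℝ => (Real.sqrt (2*Real.pi*v))⁻¹ * Real.exp (-(x-m)^2/(2*v))) := by
  rw [pdf1_eq m v hv]
  exact (((integrable_exp_neg_mul_sq (by positivity : 0 < 1/(2*v))).comp_sub_right m).const_mul _)

lemma pdf1_integral (m v : ℝ) (hv : 0 < v) :
    ∫ x : ℝ, (Real.sqrt (2*Real.pi*v))⁻¹ * Real.exp (-(x-m)^2/(2*v)) = 1 := by
  rw [pdf1_eq m v hv]
  rw [integral_const_mul]
  have h1 : (∫ x : ℝ, Real.exp (-(1/(2*v)) * (x-m)^2))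
      = ∫ x : ℝ, Real.exp (-(1/(2*v)) * x^2) := by
    rw [← integral_sub_right_eq_self (fun x => Real.exp (-(1/(2*v)) * x^2)) m]
  rw [h1, integral_gaussian]
  have h2 : Real.pi / (1/(2*v)) = 2*Real.pi*v := by field_simp
  rw [h2, inv_mul_cancel₀]
  positivity

lemma pdf1_mul_sq_integrable (m c v : ℝ) (hv : 0 < v) :
    Integrable (fun x : ℝ =>
      (Real.sqrt (2*Real.pi*v))⁻¹ * Real.exp (-(x-m)^2/(2*v)) * (x-c)^2) := by
  have hb : 0 < 1/(2*v) := by positivity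
  have : (fun x : ℝ => (Real.sqrt (2*Real.pi*v))⁻¹ * Real.exp (-(x-m)^2/(2*v)) * (x-c)^2)
      = fun x => (Real.sqrt (2*Real.pi*v))⁻¹ *
      ((x-m) ^ 2 * Real.exp (-(1/(2*v)) * (x-m) ^ 2)
        + (2*(m-c)) * ((x-m) * Real.exp (-(1/(2*v)) * (x-m) ^ 2))
        + (m-c)^2 * Real.exp (-(1/(2*v)) * (x-m) ^ 2)) := funext (pdf1_shape m c v hv)
  rw [this]
  refine Integrable.const_mul ?_ _
  refine (Integrable.add (Integrable.add ?_ ?_) ?_)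
  · exact (integrable_sq_exp hb).comp_sub_right m
  · exact ((integrable_mul_exp_neg_mul_sq hb).comp_sub_right m).const_mul _
  · exact ((integrable_exp_neg_mul_sq hb).comp_sub_right m).const_mul _

lemma pdf1_mul_sq_integral (m c v : ℝ) (hv : 0 < v) :
    ∫ x : ℝ, (Real.sqrt (2*Real.pi*v))⁻¹ * Real.exp (-(x-m)^2/(2*v)) * (x-c)^2
    = v + (m-c)^2 := by
  have hb : 0 < 1/(2*v) := by positivity
  set F : ℝ → ℝ := fun y => (Real.sqrt (2*Real.pi*v))⁻¹ *
      (y ^ 2 * Real.exp (-(1/(2*v)) * y ^ 2)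
        + (2*(m-c)) * (y * Real.exp (-(1/(2*v)) * y ^ 2))
        + (m-c)^2 * Real.exp (-(1/(2*v)) * y ^ 2)) with hF
  have hstep : (fun x : ℝ => (Real.sqrt (2*Real.pi*v))⁻¹ * Real.exp (-(x-m)^2/(2*v)) * (x-c)^2)
      = fun x => F (x - m) := funext (pdf1_shape m c v hv)
  rw [hstep, integral_sub_right_eq_self F m, hF]
  simp only []
  rw [integral_const_mul]
  have h4 : ∫ a : ℝ, (a ^ 2 * Real.exp (-(1/(2*v)) * a ^ 2)
        + 2*(m-c) * (a * Real.exp (-(1/(2*v)) * a ^ 2))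
        + (m-c)^2 * Real.exp (-(1/(2*v)) * a ^ 2))
      = (∫ a : ℝ, a ^ 2 * Real.exp (-(1/(2*v)) * a ^ 2))
        + (∫ a : ℝ, 2*(m-c) * (a * Real.exp (-(1/(2*v)) * a ^ 2)))
        + ∫ a : ℝ, (m-c)^2 * Real.exp (-(1/(2*v)) * a ^ 2) := by
    have iA : Integrable (fun a : ℝ => a ^ 2 * Real.exp (-(1/(2*v)) * a ^ 2)) :=
      integrable_sq_exp hb
    have iB : Integrable (fun a : ℝ => 2*(m-c) * (a * Real.exp (-(1/(2*v)) * a ^ 2))) :=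
      (integrable_mul_exp_neg_mul_sq hb).const_mul _
    have iC : Integrable (fun a : ℝ => (m-c)^2 * Real.exp (-(1/(2*v)) * a ^ 2)) :=
      (integrable_exp_neg_mul_sq hb).const_mul _
    have iAB : Integrable (fun a : ℝ => a ^ 2 * Real.exp (-(1/(2*v)) * a ^ 2)
        + 2*(m-c) * (a * Real.exp (-(1/(2*v)) * a ^ 2))) := iA.add iB
    have e1 : (∫ a : ℝ, (a ^ 2 * Real.exp (-(1/(2*v)) * a ^ 2)
          + 2*(m-c) * (a * Real.exp (-(1/(2*v)) * a ^ 2))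
          + (m-c)^2 * Real.exp (-(1/(2*v)) * a ^ 2)))
        = (∫ a : ℝ, (a ^ 2 * Real.exp (-(1/(2*v)) * a ^ 2)
          + 2*(m-c) * (a * Real.exp (-(1/(2*v)) * a ^ 2))))
          + ∫ a : ℝ, (m-c)^2 * Real.exp (-(1/(2*v)) * a ^ 2) := integral_add iAB iC
    have e2 : (∫ a : ℝ, (a ^ 2 * Real.exp (-(1/(2*v)) * a ^ 2)
          + 2*(m-c) * (a * Real.exp (-(1/(2*v)) * a ^ 2))))
        = (∫ a : ℝ, a ^ 2 * Real.exp (-(1/(2*v)) * a ^ 2))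
          + ∫ a : ℝ, 2*(m-c) * (a * Real.exp (-(1/(2*v)) * a ^ 2)) := integral_add iA iB
    rw [e1, e2]
  rw [h4, integral_const_mul, integral_const_mul,
    int_sq_exp hb, int_odd_exp, integral_gaussian]
  have h2 : Real.pi / (1/(2*v)) = 2*Real.pi*v := by field_simp
  rw [h2]
  have h3 : (1/(2*v)) ^ (-(3:ℝ)/2) = (2*v) * Real.sqrt (2*v) := by
    rw [one_div, Real.inv_rpow (by positivity),
      show (-(3:ℝ)/2) = -((3:ℝ)/2) by norm_num, Real.rpow_neg (by positivity), inv_inv,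
      show ((3:ℝ)/2) = 1 + 1/2 by norm_num,
      Real.rpow_add (by positivity), Real.rpow_one, ← Real.sqrt_eq_rpow]
  rw [h3]
  have h5 : Real.sqrt π / 2 * (2*v*Real.sqrt (2*v)) = v * Real.sqrt (2*π*v) := by
    rw [show Real.sqrt (2*π*v) = Real.sqrt (π * (2*v)) by ring_nf,
      Real.sqrt_mul Real.pi_pos.le]
    ring
  have h6 : Real.sqrt (2*π*v) ≠ 0 := by positivity
  field_simp
  rw [show √(2*π*v) = √π * √(2*v) by rw [← Real.sqrt_mul Real.pi_pos.le]; congr 1; ring]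
  ring

lemma gaussPdfIsoP_eq_prod {d : ℕ} (m : Fin d → ℝ) {v : ℝ} (hv : 0 < v) (z : Fin d → ℝ) :
    gaussPdfIsoP m v z
    = ∏ i, (Real.sqrt (2*Real.pi*v))⁻¹ * Real.exp (-(z i - m i)^2/(2*v)) := by
  rw [Finset.prod_mul_distrib, Finset.prod_const, ← Real.exp_sum]
  have h1 : ((2 * Real.pi * v) ^ ((d : ℝ) / 2)) = (Real.sqrt (2*Real.pi*v)) ^ d := by
    rw [Real.sqrt_eq_rpow, ← Real.rpow_natCast ((2*Real.pi*v) ^ ((1:ℝ)/2)) d,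
      ← Real.rpow_mul (by positivity)]
    congr 1
    ring
  have h2 : (∑ i, -(z i - m i)^2/(2*v)) = -(∑ i, (z i - m i) ^ 2) / (2 * v) := by
    rw [← Finset.sum_div, ← Finset.sum_neg_distrib]
  rw [gaussPdfIsoP, h1, h2, inv_pow]
  simp [Finset.card_univ]

lemma gaussPdfIsoP_pos {d : ℕ} (m : Fin d → ℝ) {v : ℝ} (hv : 0 < v) (z : Fin d → ℝ) :
    0 < gaussPdfIsoP m v z := by
  rw [gaussPdfIsoP]
  positivity

noncomputable def pdf1F (m v : ℝ) : ℝ → ℝ :=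
  fun x => (Real.sqrt (2*Real.pi*v))⁻¹ * Real.exp (-(x-m)^2/(2*v))

lemma gaussPdfIsoP_eq_prodF {d : ℕ} (m : Fin d → ℝ) {v : ℝ} (hv : 0 < v) (z : Fin d → ℝ) :
    gaussPdfIsoP m v z = ∏ i, pdf1F (m i) v (z i) :=
  gaussPdfIsoP_eq_prod m hv z

lemma gaussPdfIsoP_integrable {d : ℕ} (m : Fin d → ℝ) {v : ℝ} (hv : 0 < v) :
    Integrable (gaussPdfIsoP m v) := by
  have : gaussPdfIsoP m v = fun z : Fin d → ℝ => ∏ i, pdf1F (m i) v (z i) :=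
    funext (gaussPdfIsoP_eq_prodF m hv)
  rw [this]
  exact Integrable.fintype_prod_dep (fun i => pdf1_integrable (m i) v hv)

lemma gaussPdfIsoP_integral {d : ℕ} (m : Fin d → ℝ) {v : ℝ} (hv : 0 < v) :
    ∫ z : Fin d → ℝ, gaussPdfIsoP m v z = 1 := by
  have h : (fun z : Fin d → ℝ => gaussPdfIsoP m v z)
      = fun z : Fin d → ℝ => ∏ i, pdf1F (m i) v (z i) :=
    funext (gaussPdfIsoP_eq_prodF m hv)
  rw [h, volume_pi, integral_fintype_prod_eq_prod (ι := Fin d) (fun i => pdf1F (m i) v)]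
  simp only [pdf1F]
  rw [Finset.prod_congr rfl (fun i _ => pdf1_integral (m i) v hv), Finset.prod_const_one]

section dim2
variable {d : ℕ} (m : Fin d → ℝ) {v : ℝ} (c : ℝ) (i : Fin d)

noncomputable def gFun (m : Fin d → ℝ) (v c : ℝ) (i : Fin d) : Fin d → ℝ → ℝ :=
  Function.update (fun j => pdf1F (m j) v) i (fun x => pdf1F (m i) v x * (x - c)^2)

lemma gFun_eq (hv : 0 < v) (z : Fin d → ℝ) :
    gaussPdfIsoP m v z * (z i - c)^2 = ∏ j, gFun m v c i j (z j) := by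
  rw [gaussPdfIsoP_eq_prodF m hv]
  rw [← Finset.mul_prod_erase Finset.univ (fun j => pdf1F (m j) v (z j)) (Finset.mem_univ i),
    ← Finset.mul_prod_erase Finset.univ (fun j => gFun m v c i j (z j)) (Finset.mem_univ i)]
  have h1 : gFun m v c i i (z i) = pdf1F (m i) v (z i) * (z i - c)^2 := by
    rw [gFun, Function.update_self]
  have h2 : ∀ j ∈ Finset.univ.erase i, gFun m v c i j (z j) = pdf1F (m j) v (z j) := by
    intro j hj
    rw [gFun, Function.update_of_ne (Finset.ne_of_mem_erase hj)]
  rw [h1, Finset.prod_congr rfl h2]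
  ring

lemma gFun_integrable (hv : 0 < v) (j : Fin d) : Integrable (gFun m v c i j) := by
  rcases eq_or_ne j i with rfl | hne
  · rw [gFun, Function.update_self]
    exact pdf1_mul_sq_integrable (m j) c v hv
  · rw [gFun, Function.update_of_ne hne]
    exact pdf1_integrable (m j) v hv

lemma gaussPdfIsoP_mul_sq_integrable (hv : 0 < v) :
    Integrable (fun z : Fin d → ℝ => gaussPdfIsoP m v z * (z i - c)^2) := by
  have h : (fun z : Fin d → ℝ => gaussPdfIsoP m v z * (z i - c)^2)
      = fun z : Fin d → ℝ => ∏ j, gFun m v c i j (z j) := funext (gFun_eq m c i hv)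
  rw [h]
  exact Integrable.fintype_prod_dep (gFun_integrable m c i hv)

lemma gaussPdfIsoP_mul_sq_integral (hv : 0 < v) :
    ∫ z : Fin d → ℝ, gaussPdfIsoP m v z * (z i - c)^2 = v + (m i - c)^2 := by
  have h : (fun z : Fin d → ℝ => gaussPdfIsoP m v z * (z i - c)^2)
      = fun z : Fin d → ℝ => ∏ j, gFun m v c i j (z j) := funext (gFun_eq m c i hv)
  rw [h, volume_pi, integral_fintype_prod_eq_prod (ι := Fin d) (gFun m v c i),
    ← Finset.mul_prod_erase Finset.univ (fun j => ∫ x : ℝ, gFun m v c i j x)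
      (Finset.mem_univ i)]
  have h1 : (∫ x : ℝ, gFun m v c i i x) = v + (m i - c)^2 := by
    rw [show gFun m v c i i = fun x => pdf1F (m i) v x * (x - c)^2 from Function.update_self ..]
    simp only [pdf1F]
    exact pdf1_mul_sq_integral (m i) c v hv
  have h2 : ∀ j ∈ Finset.univ.erase i, (∫ x : ℝ, gFun m v c i j x) = 1 := by
    intro j hj
    rw [show gFun m v c i j = pdf1F (m j) v from Function.update_of_ne (Finset.ne_of_mem_erase hj) ..]
    simp only [pdf1F]
    exact pdf1_integral (m j) v hv
  rw [h1, Finset.prod_congr rfl h2, Finset.prod_const_one, mul_one]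

end dim2

lemma swap_machine {d : ℕ} (ν : Measure (Fin d → ℝ)) [IsProbabilityMeasure ν]
    (M : (Fin d → ℝ) → (Fin d → ℝ)) (hM : Continuous M) {v : ℝ} (hv : 0 < v)
    (w : (Fin d → ℝ) → ℝ) (hw : Continuous w) (hw0 : ∀ z, 0 ≤ w z)
    (hint : ∀ m, Integrable (fun z : Fin d → ℝ => gaussPdfIsoP m v z * w z))
    (hI : Integrable (fun x0 => ∫ z : Fin d → ℝ, gaussPdfIsoP (M x0) v z * w z) ν) :
    Integrable (fun z : Fin d → ℝ => ∫ x0, gaussPdfIsoP (M x0) v z * w z ∂ν) ∧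
    (∫ z : Fin d → ℝ, ∫ x0, gaussPdfIsoP (M x0) v z * w z ∂ν)
      = ∫ x0, (∫ z : Fin d → ℝ, gaussPdfIsoP (M x0) v z * w z) ∂ν := by
  set F : (Fin d → ℝ) × (Fin d → ℝ) → ℝ :=
    fun p => gaussPdfIsoP (M p.1) v p.2 * w p.2 with hF
  have hFc : Continuous F := by
    unfold F
    unfold gaussPdfIsoP
    fun_prop
  have hFm : AEStronglyMeasurable F (ν.prod volume) := hFc.aestronglyMeasurable
  have hnorm : (fun x0 => ∫ z : Fin d → ℝ, ‖F (x0, z)‖)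
      = fun x0 => ∫ z : Fin d → ℝ, gaussPdfIsoP (M x0) v z * w z := by
    funext x0
    congr 1
    funext z
    exact Real.norm_of_nonneg (mul_nonneg (gaussPdfIsoP_pos _ hv _).le (hw0 z))
  have hFi : Integrable F (ν.prod volume) := by
    rw [integrable_prod_iff hFm]
    exact ⟨Filter.Eventually.of_forall (fun x0 => hint (M x0)), by rw [hnorm]; exact hI⟩
  exact ⟨hFi.integral_prod_right, (integral_integral_swap hFi).symm⟩



lemma swap_one {d : ℕ} (ν : Measure (Fin d → ℝ)) [IsProbabilityMeasure ν]
    (M : (Fin d → ℝ) → (Fin d → ℝ)) (hM : Continuous M) {v : ℝ} (hv : 0 < v) :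
    Integrable (fun z : Fin d → ℝ => ∫ x0, gaussPdfIsoP (M x0) v z ∂ν) ∧
    (∫ z : Fin d → ℝ, ∫ x0, gaussPdfIsoP (M x0) v z ∂ν) = 1 := by
  have h := swap_machine ν M hM hv (fun _ => 1) continuous_const (fun _ => zero_le_one)
    (fun m => by simpa using gaussPdfIsoP_integrable m hv)
    (by
      have e : (fun x0 => ∫ z : Fin d → ℝ, gaussPdfIsoP (M x0) v z * 1) = fun _ => (1:ℝ) := by
        funext x0; simp only [mul_one]; exact gaussPdfIsoP_integral _ hv
      rw [e]; exact integrable_const 1)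
  simp only [mul_one] at h
  refine ⟨h.1, h.2.trans ?_⟩
  have e : (fun x0 => ∫ z : Fin d → ℝ, gaussPdfIsoP (M x0) v z) = fun _ => (1:ℝ) := by
    funext x0; exact gaussPdfIsoP_integral _ hv
  rw [e]
  simp

lemma swap_sq {d : ℕ} (ν : Measure (Fin d → ℝ)) [IsProbabilityMeasure ν]
    (M : (Fin d → ℝ) → (Fin d → ℝ)) (hM : Continuous M) {v : ℝ} (hv : 0 < v)
    (c : ℝ) (i : Fin d) (hQ : Integrable (fun x0 => (M x0 i - c)^2) ν) :
    Integrable (fun z : Fin d → ℝ => (∫ x0, gaussPdfIsoP (M x0) v z ∂ν) * (z i - c)^2) ∧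
    (∫ z : Fin d → ℝ, (∫ x0, gaussPdfIsoP (M x0) v z ∂ν) * (z i - c)^2)
      = v + ∫ x0, (M x0 i - c)^2 ∂ν := by
  have e : (fun x0 => ∫ z : Fin d → ℝ, gaussPdfIsoP (M x0) v z * (z i - c)^2)
      = fun x0 => v + (M x0 i - c)^2 := by
    funext x0; exact gaussPdfIsoP_mul_sq_integral (M x0) c i hv
  have h := swap_machine ν M hM hv (fun z => (z i - c)^2) (by fun_prop) (fun z => sq_nonneg _)
    (fun m => gaussPdfIsoP_mul_sq_integrable m c i hv)
    (by rw [e]; exact (integrable_const v).add hQ)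
  have hinner : (fun z : Fin d → ℝ => ∫ x0, gaussPdfIsoP (M x0) v z * (z i - c)^2 ∂ν)
      = fun z => (∫ x0, gaussPdfIsoP (M x0) v z ∂ν) * (z i - c)^2 := by
    funext z; exact integral_mul_const _ _
  constructor
  · have := h.1; rwa [hinner] at this
  · have h2 := h.2
    rw [hinner] at h2
    rw [h2, e, integral_add (integrable_const v) hQ, integral_const]
    simp

/-- Optimal diagonal covariance given an imperfect mean: when the reverse mean is
parameterized by a noise prediction `ε̂_n(x_n)`, the minimizer over the diagonal variances of
`D_KL(q(x_{n−1}|x_n) ‖ N(μ_n(x_n), diag σ²))` is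
`σ̃*² = λ_n² 1 + γ_n² (β̄_n/ᾱ_n) E_{q(x₀|x_n)}[(ε_n − ε̂_n(x_n))²]` componentwise. -/
theorem optimal_diag_cov_imperfect_mean_ddim {d : ℕ}
    (ν : Measure (Fin d → ℝ)) [IsProbabilityMeasure ν]
    (abarp abarn : ℝ) (h0 : 0 < abarn) (h1 : abarn < abarp) (h2 : abarp < 1)
    (bbarp bbarn : ℝ) (hbp : bbarp = 1 - abarp) (hbn : bbarn = 1 - abarn)
    (lsq : ℝ) (hl0 : 0 < lsq) (hl1 : lsq ≤ bbarp)
    (xn : Fin d → ℝ) (ehat : Fin d → ℝ)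
    (hmom1 : ∀ i, Integrable (fun x : Fin d → ℝ => x i) ν)
    (hmom2 : ∀ i j, Integrable (fun x : Fin d → ℝ => x i * x j) ν)
    -- conditional density of x_{n−1} given x_n, and the parameterized reverse mean
    (qc : (Fin d → ℝ) → ℝ)
    (hqc : ∀ z, qc z =
      ∫ x0, gaussPdfIsoP (ddimMuTilde abarp abarn bbarp bbarn lsq xn x0) lsq z ∂ν)
    (μn : Fin d → ℝ)
    (hμn : μn = ddimMuTilde abarp abarn bbarp bbarn lsq xn
      ((Real.sqrt abarn)⁻¹ • (xn - Real.sqrt bbarn • ehat)))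
    -- the corrected optimal variances
    (vstar : Fin d → ℝ)
    (hvstar : ∀ i, vstar i = lsq +
      (Real.sqrt abarp - Real.sqrt (bbarp - lsq) * Real.sqrt (abarn / bbarn)) ^ 2 *
        (bbarn / abarn) *
        ∫ x0, (ddimNoise abarn bbarn xn x0 i - ehat i) ^ 2 ∂ν)
    (hintstar : Integrable (fun z : Fin d → ℝ =>
      qc z * Real.log (qc z / gaussPdfDiag μn vstar z))) :
    ∀ v : Fin d → ℝ, (∀ i, 0 < v i) →
      Integrable (fun z : Fin d → ℝ => qc z * Real.log (qc z / gaussPdfDiag μn v z)) →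
      klDivFn qc (gaussPdfDiag μn vstar) ≤ klDivFn qc (gaussPdfDiag μn v) := by
  intro v hv hint
  have hbn0 : 0 < bbarn := by rw [hbn]; linarith
  have hbp0 : 0 < bbarp := by rw [hbp]; linarith
  have hsa : (0:ℝ) < Real.sqrt abarn := Real.sqrt_pos.mpr h0
  have hsb : (0:ℝ) < Real.sqrt bbarn := Real.sqrt_pos.mpr hbn0
  have hsa2 : Real.sqrt abarn ^ 2 = abarn := Real.sq_sqrt h0.le
  have hsb2 : Real.sqrt bbarn ^ 2 = bbarn := Real.sq_sqrt hbn0.le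
  set γ : ℝ := Real.sqrt abarp - Real.sqrt (bbarp - lsq) * Real.sqrt (abarn / bbarn) with hγ
  have hsqdiv : Real.sqrt (abarn / bbarn) = Real.sqrt abarn / Real.sqrt bbarn :=
    Real.sqrt_div h0.le bbarn
  have key : ∀ (x0 : Fin d → ℝ) (i : Fin d),
      ddimMuTilde abarp abarn bbarp bbarn lsq xn x0 i - μn i
      = γ * (x0 i - (Real.sqrt abarn)⁻¹ * (xn i - Real.sqrt bbarn * ehat i)) := by
    intro x0 i
    rw [hμn]
    unfold ddimMuTilde
    simp only [Pi.add_apply, Pi.smul_apply, Pi.sub_apply, smul_eq_mul]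
    rw [hγ, hsqdiv]
    field_simp
    ring
  have key2 : ∀ (x0 : Fin d → ℝ) (i : Fin d),
      (ddimMuTilde abarp abarn bbarp bbarn lsq xn x0 i - μn i)^2
      = γ^2 * (bbarn / abarn) * (ddimNoise abarn bbarn xn x0 i - ehat i)^2 := by
    intro x0 i
    rw [key x0 i]
    unfold ddimNoise
    simp only [Pi.smul_apply, Pi.sub_apply, smul_eq_mul]
    have h1 : x0 i - (Real.sqrt abarn)⁻¹ * (xn i - Real.sqrt bbarn * ehat i)
        = -((Real.sqrt abarn)⁻¹ * Real.sqrt bbarn)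
          * ((Real.sqrt bbarn)⁻¹ * (xn i - Real.sqrt abarn * x0 i) - ehat i) := by
      field_simp
      ring
    rw [h1]
    have h3 : ((Real.sqrt abarn)⁻¹ * Real.sqrt bbarn)^2 = bbarn/abarn := by
      rw [mul_pow, inv_pow, hsa2, hsb2, inv_mul_eq_div]
    linear_combination (γ^2 * ((Real.sqrt bbarn)⁻¹ * (xn i - Real.sqrt abarn * x0 i) - ehat i)^2) * h3
  have hMc : Continuous (fun x0 : Fin d → ℝ => ddimMuTilde abarp abarn bbarp bbarn lsq xn x0) := by
    unfold ddimMuTilde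
    fun_prop
  have hvpos : ∀ i, 0 < vstar i := by
    intro i
    rw [hvstar i]
    have h4 : 0 ≤ γ ^ 2 * (bbarn / abarn) * ∫ x0, (ddimNoise abarn bbarn xn x0 i - ehat i)^2 ∂ν :=
      mul_nonneg (mul_nonneg (sq_nonneg _) (div_nonneg hbn0.le h0.le))
        (integral_nonneg fun x0 => sq_nonneg _)
    linarith
  have hQi : ∀ i : Fin d, Integrable
      (fun x0 : Fin d → ℝ => (ddimMuTilde abarp abarn bbarp bbarn lsq xn x0 i - μn i)^2) ν := by
    intro i
    have e : (fun x0 : Fin d → ℝ => (ddimMuTilde abarp abarn bbarp bbarn lsq xn x0 i - μn i)^2)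
        = fun x0 => (γ^2) * (x0 i * x0 i)
          + (-(2*γ^2*((Real.sqrt abarn)⁻¹ * (xn i - Real.sqrt bbarn * ehat i)))) * x0 i
          + γ^2 * ((Real.sqrt abarn)⁻¹ * (xn i - Real.sqrt bbarn * ehat i))^2 := by
      funext x0
      rw [key x0 i]
      ring
    rw [e]
    exact (((hmom2 i i).const_mul _).add ((hmom1 i).const_mul _)).add (integrable_const _)
  have hfe : qc = (fun z : Fin d → ℝ =>
      ∫ x0, gaussPdfIsoP (ddimMuTilde abarp abarn bbarp bbarn lsq xn x0) lsq z ∂ν) := funext hqc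
  have sw1 := swap_one ν (fun x0 => ddimMuTilde abarp abarn bbarp bbarn lsq xn x0) hMc hl0
  have hqcInt : Integrable qc := by rw [hfe]; exact sw1.1
  have hqcOne : (∫ z : Fin d → ℝ, qc z) = 1 := by rw [hfe]; exact sw1.2
  have hQ2 : ∀ i : Fin d, Integrable (fun z : Fin d → ℝ => qc z * (z i - μn i)^2) ∧
      (∫ z : Fin d → ℝ, qc z * (z i - μn i)^2) = vstar i := by
    intro i
    have swi := swap_sq ν (fun x0 => ddimMuTilde abarp abarn bbarp bbarn lsq xn x0) hMc hl0
      (μn i) i (hQi i)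
    constructor
    · refine swi.1.congr (Filter.Eventually.of_forall fun z => ?_)
      show (∫ x0, gaussPdfIsoP (ddimMuTilde abarp abarn bbarp bbarn lsq xn x0) lsq z ∂ν)
          * (z i - μn i)^2 = qc z * (z i - μn i)^2
      rw [← hqc z]
    · have h2 := swi.2
      calc (∫ z : Fin d → ℝ, qc z * (z i - μn i)^2)
          = ∫ z : Fin d → ℝ, (∫ x0, gaussPdfIsoP (ddimMuTilde abarp abarn bbarp bbarn lsq xn x0)
              lsq z ∂ν) * (z i - μn i)^2 := by rw [hfe]
        _ = lsq + ∫ x0, (ddimMuTilde abarp abarn bbarp bbarn lsq xn x0 i - μn i)^2 ∂ν := h2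
        _ = vstar i := by
            rw [hvstar i]
            congr 1
            rw [show (fun x0 : Fin d → ℝ =>
                (ddimMuTilde abarp abarn bbarp bbarn lsq xn x0 i - μn i)^2)
              = fun x0 => (γ^2*(bbarn/abarn)) * (ddimNoise abarn bbarn xn x0 i - ehat i)^2 from
              funext fun x0 => by rw [key2 x0 i]]
            rw [integral_const_mul]
  set A : Fin d → ℝ :=
    fun i => Real.log (Real.sqrt (2*Real.pi*vstar i)) - Real.log (Real.sqrt (2*Real.pi*v i))
    with hA
  set B : Fin d → ℝ := fun i => 1/(2*vstar i) - 1/(2*v i) with hB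
  have hp1pos : ∀ z, 0 < gaussPdfDiag μn vstar z := by
    intro z; unfold gaussPdfDiag
    exact Finset.prod_pos fun i _ => by have h := hvpos i; positivity
  have hp2pos : ∀ z, 0 < gaussPdfDiag μn v z := by
    intro z; unfold gaussPdfDiag
    exact Finset.prod_pos fun i _ => by have h := hv i; positivity
  have hlogdiff : ∀ z : Fin d → ℝ,
      Real.log (gaussPdfDiag μn v z) - Real.log (gaussPdfDiag μn vstar z)
      = ∑ i, (A i + B i * (z i - μn i)^2) := by
    intro z
    unfold gaussPdfDiag
    rw [Real.log_prod (fun i _ => by have h := hv i; positivity),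
      Real.log_prod (fun i _ => by have h := hvpos i; positivity),
      ← Finset.sum_sub_distrib]
    refine Finset.sum_congr rfl fun i _ => ?_
    have h1v := hv i
    have h1s := hvpos i
    rw [Real.log_mul (by positivity) (Real.exp_ne_zero _),
      Real.log_mul (by positivity) (Real.exp_ne_zero _),
      Real.log_exp, Real.log_exp, Real.log_inv, Real.log_inv, hA, hB]
    simp only []
    ring
  have hpt : (fun z : Fin d → ℝ => qc z * Real.log (qc z / gaussPdfDiag μn vstar z)
        - qc z * Real.log (qc z / gaussPdfDiag μn v z))
      = fun z => ∑ i, (A i * qc z + B i * (qc z * (z i - μn i)^2)) := by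
    funext z
    have hqnn : qc z * Real.log (qc z / gaussPdfDiag μn vstar z)
        - qc z * Real.log (qc z / gaussPdfDiag μn v z)
        = qc z * (∑ i, (A i + B i * (z i - μn i)^2)) := by
      rcases eq_or_ne (qc z) 0 with h0' | h0'
      · simp [h0']
      · rw [Real.log_div h0' (ne_of_gt (hp1pos z)), Real.log_div h0' (ne_of_gt (hp2pos z)),
          ← hlogdiff z]
        ring
    rw [hqnn, Finset.mul_sum]
    exact Finset.sum_congr rfl fun i _ => by ring
  have hterm : ∀ i : Fin d,
      Integrable (fun z : Fin d → ℝ => A i * qc z + B i * (qc z * (z i - μn i)^2)) :=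
    fun i => (hqcInt.const_mul _).add (((hQ2 i).1).const_mul _)
  have hval : ∀ i : Fin d, (∫ z : Fin d → ℝ, (A i * qc z + B i * (qc z * (z i - μn i)^2)))
      = A i + B i * vstar i := by
    intro i
    have e1 : (∫ z : Fin d → ℝ, (A i * qc z + B i * (qc z * (z i - μn i)^2)))
        = (∫ z : Fin d → ℝ, A i * qc z) + ∫ z : Fin d → ℝ, B i * (qc z * (z i - μn i)^2) :=
      integral_add (hqcInt.const_mul _) (((hQ2 i).1).const_mul _)
    rw [e1, integral_const_mul, integral_const_mul, hqcOne, (hQ2 i).2, mul_one]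
  have e2 : (∫ z : Fin d → ℝ, (qc z * Real.log (qc z / gaussPdfDiag μn vstar z)
        - qc z * Real.log (qc z / gaussPdfDiag μn v z)))
      = klDivFn qc (gaussPdfDiag μn vstar) - klDivFn qc (gaussPdfDiag μn v) :=
    integral_sub hintstar hint
  have e3 : (∫ z : Fin d → ℝ, (qc z * Real.log (qc z / gaussPdfDiag μn vstar z)
        - qc z * Real.log (qc z / gaussPdfDiag μn v z)))
      = ∫ z : Fin d → ℝ, ∑ i, (A i * qc z + B i * (qc z * (z i - μn i)^2)) :=
    congrArg (integral volume) hpt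
  have e4 : (∫ z : Fin d → ℝ, ∑ i, (A i * qc z + B i * (qc z * (z i - μn i)^2)))
      = ∑ i, (A i + B i * vstar i) := by
    rw [integral_finset_sum Finset.univ (fun i _ => hterm i)]
    exact Finset.sum_congr rfl fun i _ => hval i
  have hdiff : klDivFn qc (gaussPdfDiag μn vstar) - klDivFn qc (gaussPdfDiag μn v)
      = ∑ i, (A i + B i * vstar i) := by rw [← e2, e3, e4]
  have hle : (∑ i, (A i + B i * vstar i)) ≤ 0 := by
    refine Finset.sum_nonpos fun i _ => ?_
    have hvi := hv i
    have hsi := hvpos i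
    have hti : 0 < vstar i / v i := div_pos hsi hvi
    have hlog := Real.log_le_sub_one_of_pos hti
    have hlogt : Real.log (vstar i / v i) = Real.log (vstar i) - Real.log (v i) :=
      Real.log_div (ne_of_gt hsi) (ne_of_gt hvi)
    have hAi : A i = (Real.log (vstar i) - Real.log (v i))/2 := by
      rw [hA]
      simp only []
      rw [Real.log_sqrt (by positivity), Real.log_sqrt (by positivity),
        Real.log_mul (by positivity) (ne_of_gt hsi), Real.log_mul (by positivity) (ne_of_gt hvi)]
      ring
    have hBi : B i * vstar i = 1/2 - (vstar i / v i)/2 := by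
      rw [hB]
      simp only []
      field_simp
    rw [hAi, hBi, ← hlogt]
    linarith
  linarith
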